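/- arXiv:1711.02779 — 3 statements merged into one kernel-verified Lean document; each statement's English description precedes it below -/
import Mathlib

section
/- Let Ω ⊂ ℝ^d be a bounded convex open set, μ ∈ ℝ, and let v be twice continuously differentiable in Ω with Δv + μ = 0 in Ω. Suppose v is semi-concave, say D²v|_x ≤ C·Id as quadratic forms for all x ∈ Ω. Then the Hessian is also uniformly bounded below: D²v|_x(e,e) ≥ −μ − C(d−1) for every unit vector e and every x ∈ Ω. Consequently ∇v is Lipschitz on Ω, and v and ∇v extend continuously to closure(Ω) with the extended gradient Lipschitz (v extends to a C^{1,1} function on closure(Ω)). -/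
open scoped RealInnerProductSpace NNReal Real
open Metric Set MeasureTheory Bornology Filter

noncomputable section

/-- The Hessian of `f` at `x`, evaluated at the pair of vectors `(u, w)`. -/
noncomputable def hess {V : Type*} [NormedAddCommGroup V] [NormedSpace ℝ V]
    (f : V → ℝ) (x u w : V) : ℝ :=
  fderiv ℝ (fun y => fderiv ℝ f y u) x w

/-- The Laplacian of `f` at `x` (the trace of its Hessian). -/
noncomputable def lap {V : Type*} [NormedAddCommGroup V] [InnerProductSpace ℝ V]
    [FiniteDimensional ℝ V] (f : V → ℝ) (x : V) : ℝ :=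
  ∑ i, hess f x (stdOrthonormalBasis ℝ V i) (stdOrthonormalBasis ℝ V i)

/-! Extend a unit vector `e` to an orthonormal basis `b`. Since the Laplacian is the trace of the
Hessian in any orthonormal basis, `D²v(e,e) = -μ - ∑_{b i ≠ e} D²v(b i, b i) ≥ -μ - C (d - 1)`.
The Hessian is symmetric, so by polarisation these two-sided bounds on its diagonal bound its
operator norm; hence `∇v` is Lipschitz on the convex set `Ω`, and then so is `v` because `Ω` is
bounded. Both extend Lipschitz-continuously to `closure Ω`, and the extended gradient is the
derivative there, being the limit of the derivatives at interior points. -/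

open InnerProductSpace
open scoped Laplacian Topology

theorem sum_sub_mul_card_sub_one_le {ι : Type*} [Fintype ι] {a : ι → ℝ} {C : ℝ}
    (ha : ∀ i, a i ≤ C) (i₀ : ι) : ∑ i, a i - C * (Fintype.card ι - 1) ≤ a i₀ := by
  classical
  have hrest : ∑ i ∈ Finset.univ.erase i₀, a i ≤ C * (Fintype.card ι - 1) := by
    calc ∑ i ∈ Finset.univ.erase i₀, a i ≤ ∑ _i ∈ Finset.univ.erase i₀, C :=
          Finset.sum_le_sum fun i _ => ha i
      _ = C * (Fintype.card ι - 1) := by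
          rw [Finset.sum_const, Finset.card_erase_of_mem (Finset.mem_univ i₀), Finset.card_univ,
            nsmul_eq_mul, Nat.cast_pred (Fintype.card_pos_iff.2 ⟨i₀⟩), mul_comm]
  linarith [Finset.add_sum_erase Finset.univ a (Finset.mem_univ i₀)]

theorem exists_orthonormalBasis_apply_eq {E : Type*} [NormedAddCommGroup E]
    [InnerProductSpace ℝ E] [FiniteDimensional ℝ E] {e : E} (he : ‖e‖ = 1) :
    ∃ (b : OrthonormalBasis (Fin (Module.finrank ℝ E)) ℝ E) (i₀ : Fin (Module.finrank ℝ E)),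
      b i₀ = e := by
  have hpos : 0 < Module.finrank ℝ E :=
    Module.finrank_pos_iff_exists_ne_zero.2 ⟨e, norm_ne_zero_iff.mp (by simp [he])⟩
  let i₀ : Fin (Module.finrank ℝ E) := ⟨0, hpos⟩
  have hortho : Orthonormal ℝ (({i₀} : Set _).domRestrict fun _ => e) :=
    ⟨fun _ => he, fun i j hij => (hij (Subsingleton.elim i j)).elim⟩
  obtain ⟨b, hb⟩ := hortho.exists_orthonormalBasis_extension_of_card_eq (by simp)
  exact ⟨b, i₀, hb i₀ rfl⟩

theorem ContinuousLinearMap.norm_le_of_abs_apply_self_le {E : Type*} [NormedAddCommGroup E]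
    [InnerProductSpace ℝ E] {B : E →L[ℝ] E →L[ℝ] ℝ} (hB : ∀ u w, B u w = B w u) {K : ℝ}
    (hK : 0 ≤ K) (h : ∀ e, ‖e‖ = 1 → |B e e| ≤ K) : ‖B‖ ≤ K := by
  have hhom : ∀ z, |B z z| ≤ K * ‖z‖ ^ 2 := by
    intro z
    rcases eq_or_ne z 0 with rfl | hz
    · simp
    have hz' : 0 < ‖z‖ := norm_pos_iff.mpr hz
    have hunit : ‖‖z‖⁻¹ • z‖ = 1 := by rw [norm_smul, norm_inv, norm_norm, inv_mul_cancel₀ hz'.ne']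
    have := h _ hunit
    simp only [map_smul, smul_apply, smul_eq_mul, abs_mul, abs_inv, abs_norm] at this
    calc |B z z| = ‖z‖ ^ 2 * (‖z‖⁻¹ * (‖z‖⁻¹ * |B z z|)) := by field_simp
      _ ≤ ‖z‖ ^ 2 * K := by gcongr
      _ = K * ‖z‖ ^ 2 := mul_comm _ _
  refine opNorm_le_of_unit_norm hK fun u hu => opNorm_le_of_unit_norm hK fun w hw => ?_
  have hpolar : 4 * B u w = B (u + w) (u + w) - B (u - w) (u - w) := by
    simp only [map_add, map_sub, add_apply, sub_apply, hB w u]; ring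
  have hpar : ‖u + w‖ ^ 2 + ‖u - w‖ ^ 2 = 4 := by
    rw [parallelogram_law_with_norm ℝ u w, hu, hw]; norm_num
  have h₁ := abs_le.mp (hhom (u + w))
  have h₂ := abs_le.mp (hhom (u - w))
  rw [Real.norm_eq_abs, abs_le]
  constructor <;> nlinarith

section SecondDerivative

variable {E : Type*} [NormedAddCommGroup E] [InnerProductSpace ℝ E] {f : E → ℝ} {x : E}

/-- `hess` differentiates in its second argument first; symmetry of the second derivative makes the
order irrelevant. -/
theorem hess_eq_fderiv_fderiv (hf : ContDiffAt ℝ 2 f x) (u w : E) :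
    hess f x u w = fderiv ℝ (fderiv ℝ f) x u w := by
  have hdiff : DifferentiableAt ℝ (fderiv ℝ f) x :=
    (hf.fderiv_right (m := 1) le_rfl).differentiableAt one_ne_zero
  rw [hess, fderiv_clm_apply hdiff (differentiableAt_const u)]
  simpa using (hf.isSymmSndFDerivAt (by simp) w u)

theorem lap_eq_laplacian [FiniteDimensional ℝ E] (hf : ContDiffAt ℝ 2 f x) :
    lap f x = Δ f x := by
  simp only [lap, laplacian_eq_iteratedFDeriv_stdOrthonormalBasis, iteratedFDeriv_two_apply,
    hess_eq_fderiv_fderiv hf]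
  rfl

theorem laplacian_sub_le_hess [FiniteDimensional ℝ E] (hf : ContDiffAt ℝ 2 f x) {C : ℝ}
    (hC : ∀ e : E, ‖e‖ = 1 → hess f x e e ≤ C) {e : E} (he : ‖e‖ = 1) :
    Δ f x - C * (Module.finrank ℝ E - 1) ≤ hess f x e e := by
  obtain ⟨b, i₀, rfl⟩ := exists_orthonormalBasis_apply_eq he
  have hsum : Δ f x = ∑ i, hess f x (b i) (b i) := by
    simp [laplacian_eq_iteratedFDeriv_orthonormalBasis f b, iteratedFDeriv_two_apply,
      hess_eq_fderiv_fderiv hf]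
  rw [hsum]
  simpa using sum_sub_mul_card_sub_one_le (fun i => hC (b i) (b.orthonormal.1 i)) i₀

theorem norm_fderiv_fderiv_le_of_abs_hess_le (hf : ContDiffAt ℝ 2 f x) {K : ℝ} (hK : 0 ≤ K)
    (h : ∀ e : E, ‖e‖ = 1 → |hess f x e e| ≤ K) : ‖fderiv ℝ (fderiv ℝ f) x‖ ≤ K :=
  ContinuousLinearMap.norm_le_of_abs_apply_self_le (hf.isSymmSndFDerivAt (by simp)) hK
    fun e he => hess_eq_fderiv_fderiv hf e e ▸ h e he

end SecondDerivative

section ExtensionToClosure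

variable {E F : Type*} [NormedAddCommGroup E] [NormedSpace ℝ E] [NormedAddCommGroup F]
  [NormedSpace ℝ F] {s : Set E} {f : E → F}

theorem LipschitzOnWith.isBounded_image {α β : Type*} [PseudoMetricSpace α] [PseudoMetricSpace β]
    {K : ℝ≥0} {g : α → β} {t : Set α} (hg : LipschitzOnWith K g t) (ht : IsBounded t) :
    IsBounded (g '' t) := by
  obtain ⟨C, hC⟩ := Metric.isBounded_iff.1 ht
  refine Metric.isBounded_iff.2 ⟨K * C, ?_⟩
  rintro _ ⟨x, hx, rfl⟩ _ ⟨y, hy, rfl⟩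
  exact (hg.dist_le_mul x hx y hy).trans (by gcongr; exact hC hx hy)

theorem Convex.exists_lipschitzOnWith_of_lipschitzOnWith_fderiv (hs : Convex ℝ s)
    (hbd : IsBounded s) (hf : ∀ x ∈ s, DifferentiableAt ℝ f x) {K : ℝ≥0}
    (hf' : LipschitzOnWith K (fderiv ℝ f) s) : ∃ L : ℝ≥0, LipschitzOnWith L f s := by
  obtain ⟨M, hM⟩ := isBounded_iff_forall_norm_le.1 (hf'.isBounded_image hbd)
  refine ⟨_, LipschitzOnWith.of_dist_le' (K := M) fun x hx y hy => ?_⟩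
  rw [dist_eq_norm, dist_eq_norm]
  exact hs.norm_image_sub_le_of_norm_fderiv_le hf (fun z hz => hM _ ⟨z, hz, rfl⟩) hy hx

theorem Convex.hasFDerivWithinAt_closure_of_continuousOn (hs : Convex ℝ s) (hso : IsOpen s)
    (hf : DifferentiableOn ℝ f s) (hfc : ContinuousOn f (closure s)) {g : E → E →L[ℝ] F}
    (hg : ContinuousOn g (closure s)) (hgf : EqOn g (fderiv ℝ f) s) {x : E}
    (hx : x ∈ closure s) : HasFDerivWithinAt f (g x) (closure s) x :=
  hasFDerivWithinAt_closure_of_tendsto_fderiv hf hs hso (fun y hy => (hfc y hy).mono subset_closure)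
    (((hg x hx).mono subset_closure).tendsto.congr' (eventuallyEq_nhdsWithin_of_eqOn hgf))

theorem Convex.exists_extension_closure_of_lipschitzOnWith_fderiv [FiniteDimensional ℝ E]
    [FiniteDimensional ℝ F] (hs : Convex ℝ s) (hso : IsOpen s) (hbd : IsBounded s)
    (hf : DifferentiableOn ℝ f s) {K : ℝ≥0} (hf' : LipschitzOnWith K (fderiv ℝ f) s) :
    ∃ (ft : E → F) (g : E → E →L[ℝ] F) (K' : ℝ≥0),
      EqOn ft f s ∧ EqOn g (fderiv ℝ f) s ∧ ContinuousOn ft (closure s) ∧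
      LipschitzOnWith K' g (closure s) ∧
      ∀ x ∈ closure s, HasFDerivWithinAt ft (g x) (closure s) x := by
  have hfd : ∀ x ∈ s, DifferentiableAt ℝ f x := fun x hx => hf.differentiableAt (hso.mem_nhds hx)
  obtain ⟨L, hL⟩ := hs.exists_lipschitzOnWith_of_lipschitzOnWith_fderiv hbd hfd hf'
  obtain ⟨ft, hft, hfft⟩ := hL.extend_finite_dimension
  obtain ⟨g, hg, hgf⟩ := hf'.extend_finite_dimension
  have hloc : ∀ x ∈ s, ft =ᶠ[𝓝 x] f := fun x hx =>
    Filter.eventuallyEq_of_mem (hso.mem_nhds hx) hfft.symm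
  refine ⟨ft, g, _, hfft.symm, hgf.symm, hft.continuous.continuousOn, hg.lipschitzOnWith,
    fun x hx => hs.hasFDerivWithinAt_closure_of_continuousOn hso ?_ hft.continuous.continuousOn
      hg.continuous.continuousOn ?_ hx⟩
  · exact fun y hy => ((hfd y hy).congr_of_eventuallyEq (hloc y hy)).differentiableWithinAt
  · exact fun y hy => (hgf hy).symm.trans (hloc y hy).fderiv_eq.symm

end ExtensionToClosure

theorem semiconcave_hessian_bounded_below {d : ℕ}
    (Ω : Set (EuclideanSpace ℝ (Fin d)))
    (hopen : IsOpen Ω) (hconv : Convex ℝ Ω) (hbd : IsBounded Ω)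
    (μ C : ℝ) (v : EuclideanSpace ℝ (Fin d) → ℝ)
    (hv : ContDiffOn ℝ 2 v Ω)
    (hlap : ∀ x ∈ Ω, lap v x + μ = 0)
    (hsc : ∀ x ∈ Ω, ∀ e : EuclideanSpace ℝ (Fin d), hess v x e e ≤ C * ‖e‖ ^ 2) :
    (∀ x ∈ Ω, ∀ e : EuclideanSpace ℝ (Fin d), ‖e‖ = 1 →
        -μ - C * ((d : ℝ) - 1) ≤ hess v x e e) ∧
    (∃ K : ℝ≥0, LipschitzOnWith K (fun x => fderiv ℝ v x) Ω) ∧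
    ∃ (vt : EuclideanSpace ℝ (Fin d) → ℝ)
      (g : EuclideanSpace ℝ (Fin d) → (EuclideanSpace ℝ (Fin d) →L[ℝ] ℝ)) (K : ℝ≥0),
      Set.EqOn vt v Ω ∧ Set.EqOn g (fun x => fderiv ℝ v x) Ω ∧
      ContinuousOn vt (closure Ω) ∧ LipschitzOnWith K g (closure Ω) ∧
      ∀ x ∈ closure Ω, HasFDerivWithinAt vt (g x) (closure Ω) x := by
  have hv2 : ∀ x ∈ Ω, ContDiffAt ℝ 2 v x := fun x hx => hv.contDiffAt (hopen.mem_nhds hx)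
  have hupper : ∀ x ∈ Ω, ∀ e : EuclideanSpace ℝ (Fin d), ‖e‖ = 1 → hess v x e e ≤ C :=
    fun x hx e he => by simpa [he] using hsc x hx e
  have hlower : ∀ x ∈ Ω, ∀ e : EuclideanSpace ℝ (Fin d), ‖e‖ = 1 →
      -μ - C * ((d : ℝ) - 1) ≤ hess v x e e := by
    intro x hx e he
    have h := laplacian_sub_le_hess (hv2 x hx) (hupper x hx) he
    rw [← lap_eq_laplacian (hv2 x hx), finrank_euclideanSpace_fin] at h
    linarith [hlap x hx]
  set M := max |C| |μ + C * ((d : ℝ) - 1)|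
  have hCM : C ≤ M := (le_abs_self _).trans (le_max_left _ _)
  have hLM : μ + C * ((d : ℝ) - 1) ≤ M := (le_abs_self _).trans (le_max_right _ _)
  have hM : 0 ≤ M := (abs_nonneg C).trans (le_max_left _ _)
  have hlip : LipschitzOnWith ⟨M, hM⟩ (fderiv ℝ v) Ω := by
    refine hconv.lipschitzOnWith_of_nnnorm_fderiv_le (𝕜 := ℝ) (fun x hx => ?_) fun x hx => ?_
    · exact ((hv2 x hx).fderiv_right (m := 1) le_rfl).differentiableAt one_ne_zero
    exact norm_fderiv_fderiv_le_of_abs_hess_le (hv2 x hx) hM fun e he =>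
      abs_le.2 ⟨by linarith [hlower x hx e he], by linarith [hupper x hx e he]⟩
  exact ⟨hlower, ⟨_, hlip⟩, hconv.exists_extension_closure_of_lipschitzOnWith_fderiv hopen hbd
    (hv.differentiableOn (by norm_num)) hlip⟩
end
end

section
/- Let Ω be a nonempty bounded open convex set in ℝ^d. Then there exist σ > 0 and R > 0 such that for every x ∈ closure(Ω) and every r ∈ (0, R), there exists a point x̂ ∈ Ω with the open ball B_{σr}(x̂) contained in B_r(x) ∩ Ω. -/
open scoped RealInnerProductSpace NNReal Real
open Metric Set MeasureTheory Bornology Filter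

noncomputable section

/-!
If `Ω` contains a ball `B_ε(x₀)` and lies in `B̄_M(x₀)`, shrink that ball towards `x ∈ closure Ω`
by the homothety of ratio `t = r / 2M` centred at `x`. By convexity the image `B_{tε}(x + t(x₀ - x))`
stays in `Ω`, and its centre is within `tM = r/2` of `x`, so it lies in `B_r(x)` as soon as `ε ≤ M`.
This gives `σ = ε / 2M` and `R = 2M`.
-/

section NormedSpace

open scoped Pointwise

variable {E : Type*} [NormedAddCommGroup E] [NormedSpace ℝ E] {s : Set E} {x y : E} {ε M r t : ℝ}

theorem Convex.ball_lineMap_subset_interior (hs : Convex ℝ s) (hball : ball y ε ⊆ s)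
    (hx : x ∈ closure s) (ht₀ : 0 < t) (ht₁ : t ≤ 1) :
    ball (AffineMap.lineMap x y t) (t * ε) ⊆ interior s :=
  calc ball (AffineMap.lineMap x y t) (t * ε)
      = t • ball y ε + (1 - t) • {x} := by
        rw [_root_.smul_ball ht₀.ne', smul_set_singleton, ball_add_singleton, Real.norm_of_nonneg ht₀.le,
          AffineMap.lineMap_apply_module, add_comm]
    _ ⊆ t • interior s + (1 - t) • closure s :=
        add_subset_add (smul_set_mono (isOpen_ball.subset_interior_iff.2 hball))
          (smul_set_mono (singleton_subset_iff.2 hx))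
    _ ⊆ interior s := hs.combo_interior_closure_subset_interior ht₀ (sub_nonneg.2 ht₁) (by ring)

theorem Convex.ball_lineMap_subset_ball_inter_interior (hs : Convex ℝ s) (hball : ball y ε ⊆ s)
    (hsM : s ⊆ closedBall y M) (hεM : ε ≤ M) (hx : x ∈ closure s) (hr : 0 < r) (hrM : r ≤ 2 * M) :
    ball (AffineMap.lineMap x y (r / (2 * M))) (ε / (2 * M) * r) ⊆ ball x r ∩ interior s := by
  have hM : 0 < M := by linarith
  set t := r / (2 * M)
  have ht₀ : 0 < t := by positivity
  have ht₁ : t ≤ 1 := (div_le_one (by positivity)).2 hrM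
  have hxy : dist x y ≤ M := closure_minimal hsM isClosed_closedBall hx
  rw [show ε / (2 * M) * r = t * ε by ring]
  refine subset_inter (ball_subset_ball' ?_) (hs.ball_lineMap_subset_interior hball hx ht₀ ht₁)
  calc t * ε + dist (AffineMap.lineMap x y t) x
      = t * ε + t * dist x y := by rw [dist_lineMap_left, Real.norm_of_nonneg ht₀.le]
    _ ≤ t * M + t * M := by gcongr
    _ = r := by simp only [t]; field_simp; ring

end NormedSpace

theorem ball_in_intersection {d : ℕ}
    (Ω : Set (EuclideanSpace ℝ (Fin d)))
    (hne : Ω.Nonempty) (hopen : IsOpen Ω) (hconv : Convex ℝ Ω) (hbd : IsBounded Ω) :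
    ∃ σ > 0, ∃ R > 0, ∀ x ∈ closure Ω, ∀ r ∈ Ioo (0:ℝ) R,
      ∃ xhat ∈ Ω, ball xhat (σ * r) ⊆ ball x r ∩ Ω := by
  obtain ⟨x₀, hx₀⟩ := hne
  obtain ⟨ε, hε, hball⟩ := isOpen_iff.1 hopen x₀ hx₀
  obtain ⟨M₀, hM₀⟩ := hbd.subset_closedBall x₀
  set M := max M₀ ε
  have hΩM : Ω ⊆ closedBall x₀ M := hM₀.trans (closedBall_subset_closedBall (le_max_left _ _))
  have hM : 0 < M := hε.trans_le (le_max_right _ _)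
  refine ⟨ε / (2 * M), by positivity, 2 * M, by positivity, fun x hx r ⟨hr, hrM⟩ => ?_⟩
  have key := hconv.ball_lineMap_subset_ball_inter_interior hball hΩM (le_max_right _ _) hx hr
    hrM.le
  rw [hopen.interior_eq] at key
  exact ⟨_, (key (mem_ball_self (by positivity))).2, key⟩
end
end

section
/- Let Γ = ⋂_{i=1}^m {x ∈ ℝ^d : x·ν_i < 0} be a polyhedral cone with faces Σ_i = closure(Γ) ∩ {x : x·ν_i = 0}. For 0 ≤ k ≤ m let Γ^{(k)} = ⋃_{S ⊆ {1,…,m}, |S| = k} (⋂_{i∉S} {x : x·ν_i ≤ 0}) ∩ (⋂_{j∈S} {x : x·ν_j = 0}) be the set of points of closure(Γ) lying on at least k faces, and for x ∈ closure(Γ) let ρ(x) = sup{ r > 0 : B_r(x) ∩ closure(Γ) = x + (B_r(0) ∩ closure(Γ_x)) } be the cone radius at x, where Γ_x = ⋂_{i : x·ν_i = 0} {y : y·ν_i < 0} is the tangent cone to Γ at x. Then for each k ∈ {1,…,m} there exists σ > 0 such that ρ(x) ≥ σ · dist(x, Γ^{(k)}) for all x ∈ Γ^{(k−1)} ∖ Γ^{(k)}.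 -/
/-!
Let `x` lie on exactly `k - 1` faces and let `j` index the nearest face not containing `x`;
its hyperplane is at distance `δ = -⟪x, ν j⟫`. The ball of radius `δ` about `x` meets no face
that `x` is not on, so `ρ x ≥ δ`; minimality of the representation yields a direction of the
tangent cone leaving `closure Γ`, which bounds the set of admissible radii, so the supremum is
a genuine one. Conversely, a linear error bound gives a point `z`, at distance `O(δ)` from `x`,
on all faces of `x` and on the face `j`. Walking from `x` towards `z` until either `z` or a new
face is reached produces a point on at least `k` faces within `O(δ)` of `x`. The constant is
uniform because there are only finitely many families of faces.
-/

open scoped RealInnerProductSpace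
open Metric Set Filter Topology

section PolyhedralCone

variable {E : Type*} [NormedAddCommGroup E] [InnerProductSpace ℝ E] {ι : Type*}

theorem closure_biInter_inner_neg {ν : ι → E} {I : Set ι}
    (hne : (⋂ i ∈ I, {y : E | ⟪y, ν i⟫ < 0}).Nonempty) :
    closure (⋂ i ∈ I, {y : E | ⟪y, ν i⟫ < 0}) = ⋂ i ∈ I, {y : E | ⟪y, ν i⟫ ≤ 0} := by
  obtain ⟨v, hv⟩ := hne
  simp only [mem_iInter₂, mem_ofPred_eq] at hv
  refine (closure_minimal ?_ ?_).antisymm fun y hy => ?_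
  · exact iInter₂_mono fun i _ y (hy : ⟪y, ν i⟫ < 0) => hy.le
  · exact isClosed_biInter fun i _ =>
      isClosed_le (continuous_id.inner continuous_const) continuous_const
  · refine closure_mono ?_ (segment_subset_closure_openSegment (right_mem_segment ℝ v y))
    rintro _ ⟨a, b, ha, hb, -, rfl⟩
    simp only [mem_iInter₂, mem_ofPred_eq] at hy ⊢
    intro i hi
    rw [inner_add_left, real_inner_smul_left, real_inner_smul_left]
    nlinarith [hv i hi, hy i hi]

theorem nonempty_iInter_inner_neg [Finite ι] {ν : ι → E} {x w : E}
    (hx : ∀ i, ⟪x, ν i⟫ ≤ 0) (hw : ∀ i, ⟪x, ν i⟫ = 0 → ⟪w, ν i⟫ < 0) :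
    (⋂ i, {y : E | ⟪y, ν i⟫ < 0}).Nonempty := by
  have hevent (i : ι) : ∀ᶠ t : ℝ in 𝓝[>] 0, ⟪x, ν i⟫ + t * ⟪w, ν i⟫ < 0 := by
    rcases (hx i).eq_or_lt with h | h
    · filter_upwards [self_mem_nhdsWithin] with t (ht : 0 < t)
      rw [h, zero_add]
      exact mul_neg_of_pos_of_neg ht (hw i h)
    · refine eventually_nhdsWithin_of_eventually_nhds ?_
      have : Continuous fun t : ℝ => ⟪x, ν i⟫ + t * ⟪w, ν i⟫ := by fun_prop
      exact this.continuousAt.eventually_lt continuousAt_const (by simpa using h)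
  obtain ⟨t, ht⟩ := (eventually_all.2 hevent).exists
  exact ⟨x + t • w, mem_iInter.2 fun i => by
    simpa [inner_add_left, real_inner_smul_left] using ht i⟩

theorem exists_inner_pos_of_ssubset [Finite ι] {ν : ι → E} {j : ι} (hνj : ν j ≠ 0)
    (h : ⋂ i, {y : E | ⟪y, ν i⟫ < 0} ⊂ ⋂ i ∈ ({j}ᶜ : Set ι), {y : E | ⟪y, ν i⟫ < 0}) :
    ∃ w : E, (∀ i ≠ j, ⟪w, ν i⟫ < 0) ∧ 0 < ⟪w, ν j⟫ := by
  obtain ⟨z, hz, hzΓ⟩ := exists_of_ssubset h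
  have hzj : 0 ≤ ⟪z, ν j⟫ := by
    by_contra! hneg
    refine hzΓ (mem_iInter.2 fun i => ?_)
    obtain rfl | hij := eq_or_ne i j
    · exact hneg
    · exact mem_iInter₂.1 hz i hij
  have hopen : IsOpen (⋂ i ∈ ({j}ᶜ : Set ι), {y : E | ⟪y, ν i⟫ < 0}) :=
    (toFinite _).isOpen_biInter fun i _ =>
      isOpen_lt (continuous_id.inner continuous_const) continuous_const
  have hnear : ∀ᶠ s : ℝ in 𝓝[>] 0, z + s • ν j ∈ ⋂ i ∈ ({j}ᶜ : Set ι), {y : E | ⟪y, ν i⟫ < 0} := by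
    refine eventually_nhdsWithin_of_eventually_nhds ?_
    have : Continuous fun s : ℝ => z + s • ν j := by fun_prop
    exact this.continuousAt.eventually_mem (by simpa using hopen.mem_nhds hz)
  obtain ⟨s, hs, hspos : 0 < s⟩ := (hnear.and self_mem_nhdsWithin).exists
  refine ⟨z + s • ν j, fun i hij => mem_iInter₂.1 hs i hij, ?_⟩
  rw [inner_add_left, real_inner_smul_left, real_inner_self_eq_norm_sq]
  have : 0 < ‖ν j‖ := norm_pos_iff.2 hνj
  positivity

theorem le_norm_of_ball_inter_eq_image {F : Type*} [SeminormedAddCommGroup F] {x u : F} {r : ℝ}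
    {Q T : Set F} (h : ball x r ∩ Q = (fun y => x + y) '' (ball 0 r ∩ T)) (hu : u ∈ T)
    (hxu : x + u ∉ Q) : r ≤ ‖u‖ := by
  by_contra! hr
  exact hxu (h.symm.subset ⟨u, ⟨mem_ball_zero_iff.2 hr, hu⟩, rfl⟩).2

theorem ball_inter_iInter_inner_nonpos {ν : ι → E} (hν : ∀ i, ‖ν i‖ ≤ 1) {x : E} {δ : ℝ}
    (hδ : ∀ i, ⟪x, ν i⟫ ≠ 0 → δ ≤ -⟪x, ν i⟫) :
    ball x δ ∩ ⋂ i, {y : E | ⟪y, ν i⟫ ≤ 0} =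
      (fun y => x + y) '' (ball 0 δ ∩ ⋂ i ∈ {i | ⟪x, ν i⟫ = 0}, {y : E | ⟪y, ν i⟫ ≤ 0}) := by
  ext y
  simp only [mem_inter_iff, mem_ball, mem_iInter, mem_ofPred_eq, mem_image, dist_eq_norm, sub_zero]
  constructor
  · rintro ⟨hy, hQ⟩
    refine ⟨y - x, ⟨hy, fun i hi => ?_⟩, add_sub_cancel x y⟩
    rw [inner_sub_left, hi, sub_zero]
    exact hQ i
  · rintro ⟨u, ⟨hu, hT⟩, rfl⟩
    refine ⟨by rwa [add_sub_cancel_left], fun i => ?_⟩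
    rw [inner_add_left]
    by_cases hi : ⟪x, ν i⟫ = 0
    · rw [hi, zero_add]
      exact hT i hi
    · have hCS : ⟪u, ν i⟫ ≤ ‖u‖ * ‖ν i‖ := real_inner_le_norm u (ν i)
      nlinarith [hδ i hi, hν i, norm_nonneg u]

theorem neg_inner_le_sSup_coneRadius [Finite ι] {ν : ι → E} (hν : ∀ i, ‖ν i‖ = 1)
    (hmin : ∀ j, ⋂ i, {y : E | ⟪y, ν i⟫ < 0} ⊂ ⋂ i ∈ ({j}ᶜ : Set ι), {y : E | ⟪y, ν i⟫ < 0})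
    {x : E} {j : ι} (hx : ∀ i, ⟪x, ν i⟫ ≤ 0) (hj : ⟪x, ν j⟫ ≠ 0)
    (hjmin : ∀ i, ⟪x, ν i⟫ ≠ 0 → ⟪x, ν i⟫ ≤ ⟪x, ν j⟫) :
    -⟪x, ν j⟫ ≤ sSup {r : ℝ | 0 < r ∧ ball x r ∩ closure (⋂ i, {y : E | ⟪y, ν i⟫ < 0}) =
      (fun y => x + y) '' (ball 0 r ∩
        closure (⋂ i ∈ {i | ⟪x, ν i⟫ = 0}, {y : E | ⟪y, ν i⟫ < 0}))} := by
  obtain ⟨w, hw, hwj⟩ := exists_inner_pos_of_ssubset (norm_ne_zero_iff.1 (by simp [hν j])) (hmin j)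
  have hwA : ∀ i, ⟪x, ν i⟫ = 0 → ⟪w, ν i⟫ < 0 := fun i hi => hw i (by rintro rfl; exact hj hi)
  have hΓ : closure (⋂ i, {y : E | ⟪y, ν i⟫ < 0}) = ⋂ i, {y : E | ⟪y, ν i⟫ ≤ 0} := by
    simpa only [mem_univ, iInter_true] using
      closure_biInter_inner_neg (I := univ) (by simpa using nonempty_iInter_inner_neg hx hwA)
  rw [hΓ, closure_biInter_inner_neg (I := {i | ⟪x, ν i⟫ = 0}) ⟨w, mem_iInter₂.2 hwA⟩]
  set c := -⟪x, ν j⟫ / ⟪w, ν j⟫ + 1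
  have hc : 0 < c := by have := div_nonneg (neg_nonneg.2 (hx j)) hwj.le; positivity
  refine le_csSup ⟨‖c • w‖, fun r hr => le_norm_of_ball_inter_eq_image hr.2 ?_ ?_⟩
    ⟨neg_pos.2 ((hx j).lt_of_ne hj), ball_inter_iInter_inner_nonpos (fun i => (hν i).le)
      fun i hi => neg_le_neg (hjmin i hi)⟩
  · exact mem_iInter₂.2 fun i hi => by
      simpa [real_inner_smul_left] using mul_nonpos_of_nonneg_of_nonpos hc.le (hwA i hi).le
  · simp only [mem_iInter, mem_ofPred_eq, not_forall, not_le]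
    refine ⟨j, ?_⟩
    rw [inner_add_left, real_inner_smul_left, add_mul, div_mul_cancel₀ _ hwj.ne']
    linarith

theorem exists_inner_eq_zero_norm_sub_le [CompleteSpace E] [Fintype ι] (v : ι → E) :
    ∃ C > 0, ∀ x : E, ∃ z, (∀ i, ⟪z, v i⟫ = 0) ∧ ‖x - z‖ ≤ C * ‖fun i => ⟪x, v i⟫‖ := by
  let T : E →L[ℝ] ι → ℝ := .pi fun i => innerSL ℝ (v i)
  have hT (x : E) : T x = fun i => ⟪x, v i⟫ := funext fun i => real_inner_comm _ _
  let T' := T.codRestrict (LinearMap.range (T : E →ₗ[ℝ] ι → ℝ)) (LinearMap.mem_range_self _)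
  obtain ⟨C, hC, hpre⟩ := T'.exists_preimage_norm_le fun ⟨y, x, hx⟩ => ⟨x, Subtype.ext hx⟩
  refine ⟨C, hC, fun x => ?_⟩
  obtain ⟨u, hu, hCu⟩ := hpre (T' x)
  have hux : T u = T x := congrArg Subtype.val hu
  rw [hT, hT] at hux
  refine ⟨x - u, fun i => by rw [inner_sub_left, congrFun hux i, sub_self], ?_⟩
  rw [sub_sub_cancel, ← hT]
  exact hCu

theorem exists_forall_finset_inner_eq_zero_norm_sub_le [CompleteSpace E] [Finite ι]
    (v : ι → E) : ∃ C > 0, ∀ (s : Finset ι) (x : E), ∃ z, (∀ i ∈ s, ⟪z, v i⟫ = 0) ∧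
      ‖x - z‖ ≤ C * ‖fun i : s => ⟪x, v i⟫‖ := by
  choose C hC hCz using fun s : Finset ι => exists_inner_eq_zero_norm_sub_le fun i : s => v i
  obtain ⟨C₀, hC₀⟩ := Finite.exists_le C
  refine ⟨C₀, (hC ∅).trans_le (hC₀ ∅), fun s x => ?_⟩
  obtain ⟨z, hz, hxz⟩ := hCz s x
  exact ⟨z, fun i hi => hz ⟨i, hi⟩, hxz.trans (by gcongr; exact hC₀ s)⟩

open Classical in
noncomputable def activeSet [Fintype ι] (ν : ι → E) (x : E) : Finset ι := {i | ⟪x, ν i⟫ = 0}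

@[simp]
theorem mem_activeSet [Fintype ι] {ν : ι → E} {x : E} {i : ι} :
    i ∈ activeSet ν x ↔ ⟪x, ν i⟫ = 0 := by
  simp [activeSet]

theorem exists_card_eq_inner_eq_zero_iff [Fintype ι] {ν : ι → E} {x : E} {n : ℕ} :
    (∃ S : Finset ι, S.card = n ∧ (∀ i ∉ S, ⟪x, ν i⟫ ≤ 0) ∧ ∀ j ∈ S, ⟪x, ν j⟫ = 0) ↔
      (∀ i, ⟪x, ν i⟫ ≤ 0) ∧ n ≤ (activeSet ν x).card := by
  constructor
  · rintro ⟨S, rfl, hle, heq⟩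
    refine ⟨fun i => ?_, Finset.card_le_card fun i hi => mem_activeSet.2 (heq i hi)⟩
    by_cases hi : i ∈ S
    · exact (heq i hi).le
    · exact hle i hi
  · rintro ⟨hle, hn⟩
    obtain ⟨S, hS, rfl⟩ := Finset.exists_subset_card_eq hn
    exact ⟨S, rfl, fun i _ => hle i, fun i hi => mem_activeSet.1 (hS hi)⟩

theorem exists_mem_segment_inner_nonpos [Finite ι] {ν : ι → E} {x z : E}
    (hx : ∀ i, ⟪x, ν i⟫ ≤ 0) (hxz : ∀ i, ⟪x, ν i⟫ = 0 → ⟪z, ν i⟫ ≤ 0) :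
    ∃ y ∈ segment ℝ x z, (∀ i, ⟪y, ν i⟫ ≤ 0) ∧ (y = z ∨ ∃ i, ⟪x, ν i⟫ ≠ 0 ∧ ⟪y, ν i⟫ = 0) := by
  by_cases hz : ∀ i, ⟪z, ν i⟫ ≤ 0
  · exact ⟨z, right_mem_segment ℝ x z, hz, Or.inl rfl⟩
  simp only [not_forall, not_le] at hz
  have : Fintype ι := Fintype.ofFinite ι
  classical
  have hxneg : ∀ i, 0 < ⟪z, ν i⟫ → ⟪x, ν i⟫ < 0 := fun i hi =>
    (hx i).lt_of_ne fun h => (hxz i h).not_gt hi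
  -- ratio test: `i₀` is the first constraint violated along the segment from `x` to `z`
  obtain ⟨i₀, hi₀, hmin⟩ := Finset.exists_min_image {i | 0 < ⟪z, ν i⟫}
    (fun i => ⟪x, ν i⟫ / (⟪x, ν i⟫ - ⟪z, ν i⟫)) (by simpa [Finset.filter_nonempty_iff] using hz)
  simp only [Finset.mem_filter, Finset.mem_univ, true_and] at hi₀ hmin
  set t := ⟪x, ν i₀⟫ / (⟪x, ν i₀⟫ - ⟪z, ν i₀⟫)
  have hx₀ := hxneg i₀ hi₀
  have hden : ⟪x, ν i₀⟫ - ⟪z, ν i₀⟫ < 0 := by linarith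
  have ht0 : 0 ≤ t := div_nonneg_of_nonpos hx₀.le hden.le
  have ht1 : t ≤ 1 := by rw [div_le_one_of_neg hden]; linarith
  have hinner (i : ι) : ⟪(1 - t) • x + t • z, ν i⟫ = ⟪x, ν i⟫ - t * (⟪x, ν i⟫ - ⟪z, ν i⟫) := by
    rw [inner_add_left, real_inner_smul_left, real_inner_smul_left]; ring
  refine ⟨(1 - t) • x + t • z, ⟨1 - t, t, by linarith, ht0, by ring, rfl⟩, fun i => ?_,
    Or.inr ⟨i₀, hx₀.ne, by rw [hinner, div_mul_cancel₀ _ hden.ne, sub_self]⟩⟩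
  rw [hinner]
  by_cases hi : 0 < ⟪z, ν i⟫
  · have hdeni : ⟪x, ν i⟫ - ⟪z, ν i⟫ < 0 := by linarith [hxneg i hi]
    have := (le_div_iff_of_neg hdeni).1 (hmin i hi)
    linarith
  · nlinarith [hx i]

theorem exists_infDist_le_neg_inner [CompleteSpace E] [Fintype ι] (ν : ι → E) :
    ∃ C > 0, ∀ (x : E) (j : ι) (n : ℕ), (∀ i, ⟪x, ν i⟫ ≤ 0) → ⟪x, ν j⟫ ≠ 0 →
      n ≤ (activeSet ν x).card + 1 →
      infDist x {y | (∀ i, ⟪y, ν i⟫ ≤ 0) ∧ n ≤ (activeSet ν y).card} ≤ C * -⟪x, ν j⟫ := by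
  classical
  obtain ⟨C, hC, hCz⟩ := exists_forall_finset_inner_eq_zero_norm_sub_le ν
  refine ⟨C, hC, fun x j n hx hj hn => ?_⟩
  have hjA : j ∉ activeSet ν x := mt mem_activeSet.1 hj
  obtain ⟨z, hzB, hxz⟩ := hCz (insert j (activeSet ν x)) x
  have hnorm : ‖fun i : (insert j (activeSet ν x) : Finset ι) => ⟪x, ν i⟫‖ ≤ -⟪x, ν j⟫ := by
    refine (pi_norm_le_iff_of_nonneg (by linarith [hx j])).2 fun ⟨i, hi⟩ => ?_
    rcases Finset.mem_insert.1 hi with rfl | hi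
    · simp [abs_of_nonpos (hx i)]
    · simp [mem_activeSet.1 hi, hx j]
  have hzA : ∀ i ∈ activeSet ν x, ⟪z, ν i⟫ = 0 := fun i hi => hzB i (Finset.mem_insert_of_mem hi)
  obtain ⟨y, hyxz, hy, hyz⟩ := exists_mem_segment_inner_nonpos hx fun i hi =>
    (hzA i (mem_activeSet.2 hi)).le
  have hAy : activeSet ν x ⊆ activeSet ν y := by
    obtain ⟨a, b, -, -, -, rfl⟩ := hyxz
    intro i hi
    simp [inner_add_left, real_inner_smul_left, mem_activeSet.1 hi, hzA i hi]
  have hny : n ≤ (activeSet ν y).card := by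
    refine hn.trans ?_
    rcases hyz with rfl | ⟨i, hi, hyi⟩
    · rw [← Finset.card_insert_of_notMem hjA]
      exact Finset.card_le_card fun i hi => mem_activeSet.2 (hzB i hi)
    · rw [← Finset.card_insert_of_notMem (mt mem_activeSet.1 hi)]
      exact Finset.card_le_card (Finset.insert_subset (mem_activeSet.2 hyi) hAy)
  calc infDist x _ ≤ dist y x := by rw [dist_comm]; exact infDist_le_dist_of_mem ⟨hy, hny⟩
    _ ≤ ‖z - x‖ := by rw [dist_eq_norm]; exact norm_sub_le_of_mem_segment hyxz
    _ ≤ C * -⟪x, ν j⟫ := by rw [norm_sub_rev]; exact hxz.trans (by gcongr)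

end PolyhedralCone

theorem cone_radius_lower_bound_general {d m : ℕ}
    (ν : Fin m → EuclideanSpace ℝ (Fin d))
    (hν : ∀ i, ‖ν i‖ = 1)
    (Γ : Set (EuclideanSpace ℝ (Fin d)))
    (hΓ : Γ = ⋂ i, {x | ⟪x, ν i⟫ < 0})
    (hmin : ∀ j, Γ ⊂ ⋂ i ∈ ({j}ᶜ : Set (Fin m)), {x | ⟪x, ν i⟫ < 0})
    (Γk : ℕ → Set (EuclideanSpace ℝ (Fin d)))
    (hΓk : ∀ n, Γk n = {x | ∃ S : Finset (Fin m), S.card = n ∧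
      (∀ i ∉ S, ⟪x, ν i⟫ ≤ 0) ∧ ∀ j ∈ S, ⟪x, ν j⟫ = 0})
    (ρ : EuclideanSpace ℝ (Fin d) → ℝ)
    (hρ : ∀ x, ρ x = sSup {r : ℝ | 0 < r ∧
      ball x r ∩ closure Γ =
        (fun y => x + y) '' (ball 0 r ∩
          closure (⋂ i ∈ {i : Fin m | ⟪x, ν i⟫ = 0}, {y | ⟪y, ν i⟫ < 0}))})
    (k : ℕ) (hkm : k ≤ m) :
    ∃ σ > 0, ∀ x ∈ Γk (k - 1) \ Γk k, σ * infDist x (Γk k) ≤ ρ x := by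
  subst hΓ
  have hΓk' (n : ℕ) : Γk n = {y | (∀ i, ⟪y, ν i⟫ ≤ 0) ∧ n ≤ (activeSet ν y).card} := by
    ext y
    rw [hΓk]
    exact exists_card_eq_inner_eq_zero_iff
  obtain ⟨C, hC, hdist⟩ := exists_infDist_le_neg_inner ν
  refine ⟨C⁻¹, inv_pos.2 hC, fun x hxk => ?_⟩
  rw [hΓk', hΓk'] at hxk
  obtain ⟨⟨hx, hk⟩, hxk⟩ := hxk
  have hA : (activeSet ν x).card < k := lt_of_not_ge fun h => hxk ⟨hx, h⟩
  have hinactive : (activeSet ν x)ᶜ.Nonempty :=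
    Finset.card_pos.1 (by rw [Finset.card_compl, Fintype.card_fin]; omega)
  obtain ⟨j, hj, hjmin⟩ := Finset.exists_max_image _ (fun i => ⟪x, ν i⟫) hinactive
  simp only [Finset.mem_compl, mem_activeSet] at hj hjmin
  calc C⁻¹ * infDist x (Γk k) ≤ C⁻¹ * (C * -⟪x, ν j⟫) := by
        rw [hΓk']
        gcongr
        exact hdist x j k hx hj (by omega)
    _ = -⟪x, ν j⟫ := inv_mul_cancel_left₀ hC.ne' _
    _ ≤ ρ x := by
        rw [hρ]
        exact neg_inner_le_sSup_coneRadius hν hmin hx hj hjmin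

theorem cone_radius_lower_bound {d m : ℕ}
    (ν : Fin m → EuclideanSpace ℝ (Fin d))
    (hν : ∀ i, ‖ν i‖ = 1)
    (Γ : Set (EuclideanSpace ℝ (Fin d)))
    (hΓ : Γ = ⋂ i, {x | ⟪x, ν i⟫ < 0})
    (hmin : ∀ j, Γ ⊂ ⋂ i ∈ ({j}ᶜ : Set (Fin m)), {x | ⟪x, ν i⟫ < 0})
    (Γk : ℕ → Set (EuclideanSpace ℝ (Fin d)))
    (hΓk : ∀ n, Γk n = {x | ∃ S : Finset (Fin m), S.card = n ∧
      (∀ i ∉ S, ⟪x, ν i⟫ ≤ 0) ∧ ∀ j ∈ S, ⟪x, ν j⟫ = 0})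
    (ρ : EuclideanSpace ℝ (Fin d) → ℝ)
    (hρ : ∀ x, ρ x = sSup {r : ℝ | 0 < r ∧
      ball x r ∩ closure Γ =
        (fun y => x + y) '' (ball 0 r ∩
          closure (⋂ i ∈ {i : Fin m | ⟪x, ν i⟫ = 0}, {y | ⟪y, ν i⟫ < 0}))})
    (k : ℕ) (hk1 : 1 ≤ k) (hkm : k ≤ m) :
    ∃ σ > 0, ∀ x ∈ Γk (k - 1) \ Γk k, σ * infDist x (Γk k) ≤ ρ x :=
  cone_radius_lower_bound_general ν hν Γ hΓ hmin Γk hΓk ρ hρ k hkm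
end
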